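/- arXiv:1211.1883 — 4 statements merged into one kernel-verified Lean document; each statement's English description precedes it below -/
import Mathlib

section
/- Let A be a commutative algebra over a field k and let {·,·} be a Lie bracket on A (not assumed to satisfy the Leibniz rule). For f ∈ A define ξ_f: A → A by ξ_f(g) = {f,g} + g·{1,f}. Assume that ξ_f is a k-derivation of A for every f ∈ A. Then [ξ_f, ξ_g] = ξ_{{f,g}} for all f, g ∈ A; in particular the maps ξ_f form a Lie subalgebra of Der_k(A). -/
/-!
Write `u f = {1, f}`, so that `ξ_f g = {f, g} + g u(f)`. Expanding the commutator with the
Leibniz rule, the terms `{f, h} u(g)`, `{g, h} u(f)` and `h u(f) u(g)` cancel and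
`[ξ_f, ξ_g] h = {f, {g, h}} - {g, {f, h}} + h (ξ_f (u g) - ξ_g (u f))`.
The first difference is `{{f, g}, h}` by the Jacobi identity, and the second is `u {f, g}`
by the Jacobi identity with `1` as first argument.
-/

section HamiltonianVectorField

variable {k A : Type*} [CommRing k] [CommRing A] [Algebra k A]
  {bracket : A → A → A} {ξ : A → Derivation k A A}

theorem hamiltonian_commutator_apply (hξ : ∀ f g, ξ f g = bracket f g + g * bracket 1 f)
    (f g h : A) :
    ⁅ξ f, ξ g⁆ h = bracket f (bracket g h) - bracket g (bracket f h) +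
      h * (ξ f (bracket 1 g) - ξ g (bracket 1 f)) := by
  rw [Derivation.commutator_apply, hξ g h, hξ f h, map_add, map_add, Derivation.leibniz,
    Derivation.leibniz, hξ f (bracket g h), hξ g (bracket f h), hξ f h, hξ g h]
  simp only [smul_eq_mul]
  ring

theorem bracket_one_bracket_eq (skew : ∀ f g, bracket f g = -bracket g f)
    (jacobi : ∀ f g h, bracket f (bracket g h) =
      bracket (bracket f g) h + bracket g (bracket f h))
    (hξ : ∀ f g, ξ f g = bracket f g + g * bracket 1 f) (f g : A) :
    bracket 1 (bracket f g) = ξ f (bracket 1 g) - ξ g (bracket 1 f) := by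
  rw [hξ, hξ, jacobi, skew g]
  ring

end HamiltonianVectorField

theorem stmt1_general (k A : Type*) [Field k] [CommRing A] [Algebra k A]
    (bracket : A → A → A)
    (skew : ∀ f g, bracket f g = - bracket g f)
    (jacobi : ∀ f g h, bracket f (bracket g h) =
      bracket (bracket f g) h + bracket g (bracket f h))
    (ξ : A → Derivation k A A)
    (hξ : ∀ f g, ξ f g = bracket f g + g * bracket 1 f) :
    ∀ f g : A, ⁅ξ f, ξ g⁆ = ξ (bracket f g) := by
  intro f g
  ext h
  rw [hamiltonian_commutator_apply hξ, ← bracket_one_bracket_eq skew jacobi hξ, hξ,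
    jacobi f g h]
  ring

/-- Hamiltonian vector fields of a Jacobi-type bracket form a Lie algebra:
`ξ_f(g) = {f,g} + g·{1,f}` satisfies `[ξ_f, ξ_g] = ξ_{{f,g}}`. -/
theorem stmt1 (k A : Type*) [Field k] [CommRing A] [Algebra k A]
    (bracket : A → A → A)
    (hadd : ∀ f g h : A, bracket (f + g) h = bracket f h + bracket g h)
    (hsmul : ∀ (c : k) (f g : A), bracket (c • f) g = c • bracket f g)
    (skew : ∀ f g, bracket f g = - bracket g f)
    (jacobi : ∀ f g h, bracket f (bracket g h) =
      bracket (bracket f g) h + bracket g (bracket f h))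
    (ξ : A → Derivation k A A)
    (hξ : ∀ f g, ξ f g = bracket f g + g * bracket 1 f) :
    ∀ f g : A, ⁅ξ f, ξ g⁆ = ξ (bracket f g) :=
  stmt1_general k A bracket skew jacobi ξ hξ
end

section
/- Let A be a commutative k-algebra and v ⊆ Der_k(A) a k-subspace of derivations satisfying the incompressibility condition: whenever f_1,…,f_m ∈ A and ξ_1,…,ξ_m ∈ v satisfy Σ_i f_i ξ_i = 0 in Der_k(A), one has Σ_i ξ_i(f_i) = 0. Then there is a well-defined k-linear map D: A·v → A on the A-linear span of v given by D(Σ_i f_i ξ_i) = Σ_i ξ_i(f_i), and D satisfies D(g·θ) = g·D(θ) + θ(g) for all g ∈ A and θ ∈ A·v. -/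
/-!
For a set `s` of derivations, `c ↦ ∑ ξ, ξ (c ξ)` is a `k`-linear map on formal combinations
`c : s →₀ A`, and incompressibility says exactly that it vanishes on the kernel of the
evaluation `c ↦ ∑ ξ, c ξ • ξ`, whose image is `A·s`. Hence it descends to a `k`-linear map on
`A·s`. The rule `D(g·θ) = g·D(θ) + θ(g)` already holds on formal combinations, where it is the
Leibniz rule of each `ξ`.
-/

section

open Finsupp Submodule

theorem Finsupp.exists_fin_sum_single {α M : Type*} [AddCommMonoid M] (c : α →₀ M) :
    ∃ (m : ℕ) (x : Fin m → α) (f : Fin m → M), ∑ i, single (x i) (f i) = c := by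
  classical
  let e := c.support.equivFin.symm
  refine ⟨_, fun i => e i, fun i => c (e i), ?_⟩
  rw [Fintype.sum_equiv e _ (fun x => single (x : α) (c x)) (fun _ => rfl),
    Finset.sum_coe_sort c.support fun x => single x (c x), ← Finsupp.sum, sum_single]

theorem LinearMap.exists_comp_eq_of_surjective_of_ker_le {R M N P : Type*} [Ring R]
    [AddCommGroup M] [AddCommGroup N] [AddCommGroup P] [Module R M] [Module R N] [Module R P]
    {f : M →ₗ[R] N} (hf : Function.Surjective f) {g : M →ₗ[R] P} (h : ker f ≤ ker g) :
    ∃ d : N →ₗ[R] P, ∀ x, d (f x) = g x :=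
  ⟨(ker f).liftQ g h ∘ₗ (f.quotKerEquivOfSurjective hf).symm, fun x => by simp⟩

namespace Derivation

variable {k A : Type*} [CommRing k] [CommRing A] [Algebra k A] (s : Set (Derivation k A A))

noncomputable def formalDiv : (s →₀ A) →ₗ[k] A :=
  lsum k fun ξ : s => (ξ : Derivation k A A).toLinearMap

@[simp]
theorem formalDiv_single (ξ : s) (a : A) : formalDiv s (single ξ a) = (ξ : Derivation k A A) a :=
  lsum_single _ _ _ _

variable {s}

theorem formalDiv_smul (g : A) (c : s →₀ A) :
    formalDiv s (g • c) =
      g * formalDiv s c + linearCombination A ((↑) : s → Derivation k A A) c g := by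
  induction c using Finsupp.induction_linear with
  | zero => simp
  | add c c' hc hc' => simp only [smul_add, map_add, hc, hc', add_apply]; ring
  | single ξ a =>
    simp only [smul_single, smul_eq_mul, formalDiv_single, leibniz, linearCombination_single,
      smul_apply, mul_comm a]

noncomputable def linearCombinationSpan : (s →₀ A) →ₗ[A] span A s :=
  (linearCombination A (↑)).codRestrict _ fun c =>
    (mem_span_iff_linearCombination _ _ _).2 ⟨c, rfl⟩

theorem linearCombinationSpan_surjective :
    Function.Surjective (linearCombinationSpan (s := s)) :=
  fun θ => ((mem_span_iff_linearCombination _ _ _).1 θ.2).imp fun _ h => Subtype.ext h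

theorem linearCombinationSpan_apply_coe (c : s →₀ A) :
    (linearCombinationSpan c : Derivation k A A) = linearCombination A (↑) c :=
  rfl

variable (s) in
def IsIncompressible : Prop :=
  ∀ c : s →₀ A,
    linearCombination A ((↑) : s → Derivation k A A) c = 0 → formalDiv s c = 0

theorem isIncompressible_of_forall_fin
    (h : ∀ (m : ℕ) (f : Fin m → A) (ξ : Fin m → Derivation k A A),
      (∀ i, ξ i ∈ s) → ∑ i, f i • ξ i = 0 → ∑ i, ξ i (f i) = 0) :
    IsIncompressible s := by
  intro c hc
  obtain ⟨m, ξ, f, rfl⟩ := c.exists_fin_sum_single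
  simp only [map_sum, linearCombination_single, formalDiv_single] at hc ⊢
  exact h m f (fun i => ξ i) (fun i => (ξ i).2) hc

theorem IsIncompressible.exists_div (hs : IsIncompressible s) :
    ∃ D : span A s →ₗ[k] A, ∀ c, D (linearCombinationSpan c) = formalDiv s c :=
  LinearMap.exists_comp_eq_of_surjective_of_ker_le
    (f := linearCombinationSpan.restrictScalars k)
    linearCombinationSpan_surjective fun c hc => hs c (congrArg Subtype.val hc)

end Derivation

end

/-- If a subspace `v` of derivations satisfies the incompressibility condition,
then there is a well-defined divergence function `D` on the `A`-span of `v`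
with `D(Σ fᵢ ξᵢ) = Σ ξᵢ(fᵢ)` and `D(g·θ) = g·D(θ) + θ(g)`. -/
theorem stmt5 (k A : Type*) [Field k] [CommRing A] [Algebra k A]
    (v : Submodule k (Derivation k A A))
    (hinc : ∀ (m : ℕ) (f : Fin m → A) (ξ : Fin m → Derivation k A A),
      (∀ i, ξ i ∈ v) → ∑ i, f i • ξ i = 0 → ∑ i, (ξ i) (f i) = 0) :
    ∃ D : (Submodule.span A ((v : Set (Derivation k A A)))) →ₗ[k] A,
      (∀ (m : ℕ) (f : Fin m → A) (ξ : Fin m → Derivation k A A),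
        (∀ i, ξ i ∈ v) →
        ∀ hmem : ∑ i, f i • ξ i ∈ Submodule.span A ((v : Set (Derivation k A A))),
          D ⟨∑ i, f i • ξ i, hmem⟩ = ∑ i, (ξ i) (f i)) ∧
      (∀ (g : A) (θ : (Submodule.span A ((v : Set (Derivation k A A))))),
        D (g • θ) = g * D θ + (θ : Derivation k A A) g) := by
  obtain ⟨D, hD⟩ := (Derivation.isIncompressible_of_forall_fin hinc).exists_div
  refine ⟨D, fun m f ξ hξ hmem => ?_, fun g θ => ?_⟩
  · let c : (v : Set (Derivation k A A)) →₀ A := ∑ i, Finsupp.single ⟨ξ i, hξ i⟩ (f i)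
    have hc : ⟨∑ i, f i • ξ i, hmem⟩ = Derivation.linearCombinationSpan c := by
      apply Subtype.ext
      rw [Derivation.linearCombinationSpan_apply_coe]
      simp only [c, map_sum, Finsupp.linearCombination_single]
    rw [hc, hD]
    simp only [c, map_sum, Derivation.formalDiv_single]
  · obtain ⟨c, rfl⟩ := Derivation.linearCombinationSpan_surjective θ
    rw [← LinearMap.map_smul, hD, hD, Derivation.formalDiv_smul,
      Derivation.linearCombinationSpan_apply_coe]
end

section
/- Let k be a field of characteristic zero and A = k[x, y, z, z^{−1}]. Let V ⊆ A be the k-linear span of all elements of the forms y²·a, (y∂_y + z∂_z)(a), and ∂_z(a) for a ∈ A. Then the quotient vector space A/V is infinite-dimensional; more precisely, A decomposes as A = V ⊕ W where W is the k-span of the monomials x^i y z^{−1} for i ≥ 0. -/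
/-- The ring `A = k[x, y, z, z⁻¹]`, modeled as the monoid algebra of `ℕ × ℕ × ℤ`,
with monomial `x^i y^j z^l` corresponding to `(i, j, l)`. -/
noncomputable abbrev LRing (k : Type*) [Field k] := AddMonoidAlgebra k (ℕ × ℕ × ℤ)

/-- The derivation `y∂_y + z∂_z` : on monomials, `x^i y^j z^l ↦ (j + l)·x^i y^j z^l`. -/
noncomputable def Dyz (k : Type*) [Field k] : LRing k →ₗ[k] LRing k :=
  (Finsupp.lsum k fun m => LinearMap.toSpanSingleton k (LRing k)
    (AddMonoidAlgebra.single m ((((m.2.1 : ℤ) + m.2.2 : ℤ) : k))))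
    ∘ₗ (AddMonoidAlgebra.coeffLinearEquiv k).toLinearMap

/-- The derivation `∂_z` : on monomials, `x^i y^j z^l ↦ l·x^i y^j z^(l−1)`. -/
noncomputable def Dz (k : Type*) [Field k] : LRing k →ₗ[k] LRing k :=
  (Finsupp.lsum k fun m => LinearMap.toSpanSingleton k (LRing k)
    (AddMonoidAlgebra.single (m.1, m.2.1, m.2.2 - 1) ((m.2.2 : ℤ) : k)))
    ∘ₗ (AddMonoidAlgebra.coeffLinearEquiv k).toLinearMap

/-- The subspace `V = y²·A + (y∂_y + z∂_z)(A) + ∂_z(A)`. -/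
noncomputable def Vsub (k : Type*) [Field k] : Submodule k (LRing k) :=
  Submodule.span k
    (Set.range (fun a : LRing k =>
        AddMonoidAlgebra.single ((0 : ℕ), (2 : ℕ), (0 : ℤ)) (1 : k) * a) ∪
      Set.range (Dyz k) ∪ Set.range (Dz k))

/-- The subspace `W` spanned by the monomials `x^i y z⁻¹`, `i ≥ 0`. -/
noncomputable def Wsub (k : Type*) [Field k] : Submodule k (LRing k) :=
  Submodule.span k
    (Set.range fun i : ℕ =>
      (AddMonoidAlgebra.single (i, (1 : ℕ), (-1 : ℤ)) (1 : k) : LRing k))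

/-!
Every monomial `x^i y^j z^l` with `(j, l) ≠ (1, -1)` lies in `V`: for `j ≥ 2` it is a multiple
of `y²`, for `j + l ≠ 0` it is an eigenvector of `y∂_y + z∂_z` with nonzero eigenvalue, and the
remaining case `(j, l) = (0, 0)` is `∂_z (x^i z)`. Conversely the coefficient of `x^i y z⁻¹`
vanishes on `y²A`, on the image of `y∂_y + z∂_z` (eigenvalue `0`) and on the image of `∂_z`
(`z⁻¹` is not a derivative). So `V` and `W` are the subspaces supported on complementary sets of
monomials, and `A/V ≅ W` has the infinite basis `x^i y z⁻¹`.
-/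

namespace AddMonoidAlgebra

variable {R S M : Type*}

theorem isCompl_supported_compl [Semiring R] [Semiring S] [Module R S] (s : Set M) :
    IsCompl (supported R S s) (supported R S sᶜ) := by
  rw [supported_eq_map, supported_eq_map]
  refine (Submodule.orderIsoMapComap (coeffLinearEquiv R).symm).isCompl_iff.mp
    ⟨Finsupp.disjoint_supported_supported disjoint_compl_right, codisjoint_iff.2 ?_⟩
  rw [← Finsupp.supported_union, Set.union_compl_self, Finsupp.supported_univ]

theorem not_finite_quotient_supported_compl [Ring R] [Nontrivial R] {s : Set M}
    (hs : s.Infinite) : ¬ Module.Finite R (AddMonoidAlgebra R M ⧸ supported R R sᶜ) := by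
  intro hfin
  have : Module.Finite R (s →₀ R) := Module.Finite.equiv
    ((Submodule.quotientEquivOfIsCompl _ _ (isCompl_supported_compl s).symm) ≪≫ₗ
      supportedEquivFinsupp (R := R) (S := R) s)
  exact hs (Set.finite_coe_iff.mp
    (Module.Finite.finite_basis (Finsupp.basisSingleOne (R := R) (ι := s))))

end AddMonoidAlgebra

open AddMonoidAlgebra

def yzInvExponents : Set (ℕ × ℕ × ℤ) := {m | m.2 = (1, -1)}

theorem range_eq_yzInvExponents :
    Set.range (fun i : ℕ => ((i, 1, -1) : ℕ × ℕ × ℤ)) = yzInvExponents := by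
  ext ⟨i, p⟩
  simp [yzInvExponents, eq_comm]

theorem infinite_yzInvExponents : yzInvExponents.Infinite := by
  rw [← range_eq_yzInvExponents]
  exact Set.infinite_range_of_injective fun i j h => by simpa using congrArg Prod.fst h

theorem Wsub_eq_supported (k : Type*) [Field k] : Wsub k = supported k k yzInvExponents := by
  rw [supported_eq_span_single, ← range_eq_yzInvExponents, ← Set.range_comp]
  rfl

section
variable {k : Type*} [Field k]

theorem Dyz_single (m : ℕ × ℕ × ℤ) (c : k) :
    Dyz k (single m c) = single m (c * (((m.2.1 : ℤ) + m.2.2 : ℤ) : k)) := by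
  simp [Dyz, coeff_single, mul_add, single_add]

theorem Dz_single (m : ℕ × ℕ × ℤ) (c : k) :
    Dz k (single m c) = single (m.1, m.2.1, m.2.2 - 1) (c * ((m.2.2 : ℤ) : k)) := by
  simp [Dz, coeff_single]

theorem coeff_Dyz (a : LRing k) (m : ℕ × ℕ × ℤ) :
    (Dyz k a).coeff m = a.coeff m * (((m.2.1 : ℤ) + m.2.2 : ℤ) : k) := by
  induction a using induction_linear with
  | zero => simp
  | add f g hf hg => simp [coeff_add, hf, hg, add_mul]
  | single n c =>
    rw [Dyz_single]
    by_cases h : n = m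
    · simp [h]
    · rw [coeff_single, coeff_single, Finsupp.single_eq_of_ne' h, Finsupp.single_eq_of_ne' h,
        zero_mul]

theorem coeff_Dz (a : LRing k) (i j : ℕ) (l : ℤ) :
    (Dz k a).coeff (i, j, l) = a.coeff (i, j, l + 1) * ((l + 1 : ℤ) : k) := by
  induction a using induction_linear with
  | zero => simp
  | add f g hf hg => simp [coeff_add, hf, hg, add_mul]
  | single n c =>
    rw [Dz_single]
    by_cases h : n = (i, j, l + 1)
    · simp [h]
    · have h' : (n.1, n.2.1, n.2.2 - 1) ≠ (i, j, l) := by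
        contrapose! h
        obtain ⟨n1, n2, n3⟩ := n
        simp only [Prod.mk.injEq] at h ⊢
        omega
      rw [coeff_single, coeff_single, Finsupp.single_eq_of_ne' h, Finsupp.single_eq_of_ne' h',
        zero_mul]

theorem coeff_y_sq_mul (a : LRing k) (i : ℕ) (l : ℤ) :
    (single ((0 : ℕ), (2 : ℕ), (0 : ℤ)) (1 : k) * a).coeff (i, 1, l) = 0 :=
  coeff_single_mul_of_forall_add_ne _ _ fun d h => by
    have := congrArg (fun p : ℕ × ℕ × ℤ => p.2.1) h
    simp at this
    omega

theorem y_sq_mul_mem_Vsub (a : LRing k) :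
    single ((0 : ℕ), (2 : ℕ), (0 : ℤ)) (1 : k) * a ∈ Vsub k :=
  Submodule.subset_span (.inl (.inl ⟨a, rfl⟩))

theorem Dyz_mem_Vsub (a : LRing k) : Dyz k a ∈ Vsub k :=
  Submodule.subset_span (.inl (.inr ⟨a, rfl⟩))

theorem Dz_mem_Vsub (a : LRing k) : Dz k a ∈ Vsub k :=
  Submodule.subset_span (.inr ⟨a, rfl⟩)

theorem single_mem_Vsub [CharZero k] {m : ℕ × ℕ × ℤ} (hm : m ∉ yzInvExponents) (c : k) :
    single m c ∈ Vsub k := by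
  obtain ⟨i, j, l⟩ := m
  by_cases hj : 2 ≤ j
  · convert y_sq_mul_mem_Vsub (single (i, j - 2, l) c) using 1
    have hexp : ((0, 2, 0) : ℕ × ℕ × ℤ) + (i, j - 2, l) = (i, j, l) := by
      simp only [Prod.mk_add_mk, zero_add, Prod.mk.injEq, true_and, and_true]
      omega
    rw [single_mul_single, one_mul, hexp]
  by_cases hjl : ((j + l : ℤ) : k) = 0
  · have hj0 : j = 0 ∧ l = 0 := by
      simp only [yzInvExponents, Set.mem_ofPred_eq, Prod.mk.injEq, not_and] at hm
      have : (j : ℤ) + l = 0 := by exact_mod_cast hjl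
      omega
    obtain ⟨rfl, rfl⟩ := hj0
    convert Dz_mem_Vsub (single (i, 0, 1) c) using 1
    simp [Dz_single]
  · convert Dyz_mem_Vsub (single (i, j, l) (c * ((j + l : ℤ) : k)⁻¹)) using 1
    rw [Dyz_single, mul_assoc, inv_mul_cancel₀ hjl, mul_one]

end

theorem Vsub_eq_supported (k : Type*) [Field k] [CharZero k] :
    Vsub k = supported k k yzInvExponentsᶜ := by
  refine le_antisymm (Submodule.span_le.2 ?_) ?_
  · rintro _ ((⟨a, rfl⟩ | ⟨a, rfl⟩) | ⟨a, rfl⟩) <;>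
      refine mem_supported'.2 fun ⟨i, j, l⟩ hm => ?_ <;>
      obtain ⟨rfl, rfl⟩ : j = 1 ∧ l = -1 := by simpa [yzInvExponents] using hm
    · exact coeff_y_sq_mul a i (-1)
    · simp [coeff_Dyz]
    · simp [coeff_Dz]
  · rw [supported_eq_span_single, Submodule.span_le]
    rintro _ ⟨m, hm, rfl⟩
    exact single_mem_Vsub hm 1

/-- For `A = k[x,y,z,z⁻¹]` and `V` the span of all `y²·a`, `(y∂_y + z∂_z)(a)`, `∂_z(a)`:
`A = V ⊕ W` where `W` is spanned by the monomials `x^i y z⁻¹`, and `A/V` is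
infinite-dimensional over `k`. -/
theorem stmt12 (k : Type*) [Field k] [CharZero k] :
    IsCompl (Vsub k) (Wsub k) ∧ ¬ Module.Finite k (LRing k ⧸ Vsub k) := by
  rw [Vsub_eq_supported, Wsub_eq_supported]
  exact ⟨(isCompl_supported_compl _).symm,
    not_finite_quotient_supported_compl infinite_yzInvExponents⟩
end

section
/- Let k be a field of characteristic zero and B = k[x,y,z]/(x³ + y³ + z³), equipped with the Poisson bracket determined by {x,y} = 3z², {y,z} = 3x², {z,x} = 3y² (the Jacobian Poisson structure). Then: (a) the Euler derivation E = x∂_x + y∂_y + z∂_z of B is a Poisson derivation, i.e., E({f,g}) = {E(f), g} + {f, E(g)} for all f, g ∈ B; (b) E is not Hamiltonian: there is no h ∈ B with {h, f} = E(f) for all f ∈ B. For (b) it suffices that {h, x} lies in the square m² of the maximal ideal m = (x,y,z) for every h, while E(x) = x ∉ m². -/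
/-!
The bracket of two coordinates is a scalar multiple of the square of a coordinate. Euler's
derivation doubles such squares, which makes it a derivation of the bracket on pairs of
generators, hence everywhere by skew-symmetry and the Leibniz rule. On the other hand `{x, ·}`
is a derivation with quadratic values on generators, so all its values lie in `m²` and are killed
by the tangent vector `∂_x` at the vertex; thus `{h, x} = -{x, h}` is killed too, whereas
`E x = x` is not.
-/

set_option synthInstance.maxHeartbeats 1000000
open MvPolynomial

/-- The coordinate ring `B = k[x,y,z]/(x³ + y³ + z³)` of the cone over the Fermat cubic. -/
noncomputable abbrev FermatCone (k : Type*) [Field k] :=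
  MvPolynomial (Fin 3) k ⧸
    (Ideal.span {((X 0 : MvPolynomial (Fin 3) k) ^ 3 + (X 1) ^ 3 + (X 2) ^ 3)})

theorem MvPolynomial.adjoin_range_mk_X {σ R : Type*} [CommRing R]
    (I : Ideal (MvPolynomial σ R)) :
    Algebra.adjoin R (Set.range fun i => Ideal.Quotient.mk I (X i)) = ⊤ := by
  rw [show (Set.range fun i => Ideal.Quotient.mk I (X i)) = Ideal.Quotient.mkₐ R I '' Set.range X
    from Set.range_comp _ _, ← AlgHom.map_adjoin, adjoin_range_X, Algebra.map_top,
    AlgHom.range_eq_top]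
  exact Ideal.Quotient.mkₐ_surjective R I

namespace Derivation

variable {R A : Type*}

theorem map_mem_of_adjoin_eq_top [CommSemiring R] [CommSemiring A] [Algebra R A] {M : Type*}
    [AddCommMonoid M] [Module A M] [Module R M] {s : Set A} (hs : Algebra.adjoin R s = ⊤)
    (D : Derivation R A M) {N : Submodule A M} (h : ∀ x ∈ s, D x ∈ N) (a : A) : D a ∈ N := by
  have ha : a ∈ Algebra.adjoin R s := hs ▸ Algebra.mem_top
  induction ha using Algebra.adjoin_induction with
  | mem x hx => exact h x hx
  | algebraMap r => simp
  | add x y _ _ hx hy => rw [map_add]; exact add_mem hx hy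
  | mul x y _ _ hx hy => rw [leibniz]; exact add_mem (N.smul_mem x hy) (N.smul_mem y hx)

theorem map_bracket_of_adjoin_eq_top [CommRing R] [CommRing A] [Algebra R A] {s : Set A}
    (hs : Algebra.adjoin R s = ⊤) {ξ : A → Derivation R A A} (skew : ∀ f g, ξ f g = -ξ g f)
    (E : Derivation R A A) (h : ∀ x ∈ s, ∀ y ∈ s, E (ξ x y) = ξ (E x) y + ξ x (E y))
    (f g : A) : E (ξ f g) = ξ (E f) g + ξ f (E g) := by
  -- The defect `⁅E, ξ f⁆ g - ξ (E f) g` is a derivation in `g` and skew in `(f, g)`, so it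
  -- vanishes once it vanishes on pairs of generators.
  have defect_swap : ∀ f g, ⁅E, ξ f⁆ g - ξ (E f) g = -(⁅E, ξ g⁆ f - ξ (E g) f) := by
    intro f g
    rw [commutator_apply, commutator_apply, skew f g, skew f (E g), skew (E f) g, map_neg]
    ring
  have on_gen : ∀ x ∈ s, ⁅E, ξ x⁆ = ξ (E x) := fun x hx =>
    ext_of_adjoin_eq_top s hs fun y hy => by
      rw [commutator_apply, h x hx y hy]; ring
  have : ⁅E, ξ f⁆ = ξ (E f) := ext_of_adjoin_eq_top s hs fun y hy => by
    simpa [on_gen y hy, sub_eq_zero] using defect_swap f y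
  rw [← this, commutator_apply]
  ring

end Derivation

namespace FermatCone

variable {k : Type*} [Field k]

variable (k) in
noncomputable abbrev coord (i : Fin 3) : FermatCone k := Ideal.Quotient.mk _ (X i)

theorem adjoin_range_coord : Algebra.adjoin k (Set.range (coord k)) = ⊤ :=
  adjoin_range_mk_X _

theorem coord_bracket_eq_smul_sq [CharZero k]
    {ξ : FermatCone k → Derivation k (FermatCone k) (FermatCone k)}
    (skew : ∀ f g, ξ f g = -ξ g f)
    (hxy : ξ (coord k 0) (coord k 1) = 3 * coord k 2 ^ 2)
    (hyz : ξ (coord k 1) (coord k 2) = 3 * coord k 0 ^ 2)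
    (hzx : ξ (coord k 2) (coord k 0) = 3 * coord k 1 ^ 2) (i j : Fin 3) :
    ∃ (c : k) (l : Fin 3), ξ (coord k i) (coord k j) = c • coord k l ^ 2 := by
  have diag : ∀ f, ξ f f = 0 := fun f => by
    have : (2 : k) • ξ f f = 0 := by rw [two_smul]; nth_rw 1 [skew]; exact neg_add_cancel _
    exact (smul_eq_zero.1 this).resolve_left two_ne_zero
  have three : ∀ y : FermatCone k, 3 * y = (3 : k) • y := fun y => by
    rw [ofNat_smul_eq_nsmul, nsmul_eq_mul, Nat.cast_ofNat]
  have neg_three : ∀ y : FermatCone k, -(3 * y) = (-3 : k) • y := fun y => by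
    rw [neg_smul, three]
  fin_cases i <;> fin_cases j
  exacts [⟨0, 0, by simp [diag]⟩, ⟨3, 2, by simp [hxy, three]⟩,
    ⟨-3, 1, by rw [skew]; simp [hzx, neg_three]⟩, ⟨-3, 2, by rw [skew]; simp [hxy, neg_three]⟩,
    ⟨0, 0, by simp [diag]⟩, ⟨3, 0, by simp [hyz, three]⟩,
    ⟨3, 1, by simp [hzx, three]⟩, ⟨-3, 0, by rw [skew]; simp [hyz, neg_three]⟩,
    ⟨0, 0, by simp [diag]⟩]

theorem euler_coord_sq {E : Derivation k (FermatCone k) (FermatCone k)}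
    (hE : ∀ i, E (coord k i) = coord k i) (l : Fin 3) :
    E (coord k l ^ 2) = 2 • coord k l ^ 2 := by
  rw [Derivation.leibniz_pow, hE, pow_one, smul_eq_mul, ← sq]

-- The tangent vector `∂_x` at the vertex, as a `k[ε]`-point of the cone; it kills `m²`.
variable (k) in
noncomputable def tangentX : FermatCone k →ₐ[k] DualNumber k :=
  Ideal.Quotient.liftₐ _ (aeval (Pi.single 0 DualNumber.eps)) fun a ha => by
    obtain ⟨c, rfl⟩ := Ideal.mem_span_singleton'.1 ha
    simp [DualNumber.eps_mul_eps, pow_succ]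

theorem tangentX_coord (i : Fin 3) :
    tangentX k (coord k i) = aeval (R := k) (Pi.single 0 (DualNumber.eps : DualNumber k)) (X i) :=
  rfl

theorem tangentX_coord_zero : tangentX k (coord k 0) = DualNumber.eps := by
  simp [tangentX_coord]

theorem tangentX_coord_sq (l : Fin 3) : tangentX k (coord k l ^ 2) = 0 := by
  fin_cases l <;> simp [tangentX_coord, sq, DualNumber.eps_mul_eps]

section Bracket

variable {ξ : FermatCone k → Derivation k (FermatCone k) (FermatCone k)}
  {E : Derivation k (FermatCone k) (FermatCone k)}

theorem euler_map_bracket (skew : ∀ f g, ξ f g = -ξ g f)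
    (bracket : ∀ i j, ∃ (c : k) (l : Fin 3), ξ (coord k i) (coord k j) = c • coord k l ^ 2)
    (hE : ∀ i, E (coord k i) = coord k i) (f g : FermatCone k) : E (ξ f g) = ξ (E f) g + ξ f (E g) := by
  refine Derivation.map_bracket_of_adjoin_eq_top adjoin_range_coord skew E ?_ f g
  rintro _ ⟨i, rfl⟩ _ ⟨j, rfl⟩
  obtain ⟨c, l, hc⟩ := bracket i j
  rw [hE, hE, hc, E.map_smul, euler_coord_sq hE, smul_comm, ← two_smul ℕ]

theorem bracket_ne_euler (skew : ∀ f g, ξ f g = -ξ g f)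
    (bracket : ∀ i j, ∃ (c : k) (l : Fin 3), ξ (coord k i) (coord k j) = c • coord k l ^ 2)
    (hE : ∀ i, E (coord k i) = coord k i) (h : FermatCone k) : ξ h ≠ E := by
  intro hh
  have hker : ∀ a, ξ (coord k 0) a ∈ RingHom.ker (tangentX k) :=
    Derivation.map_mem_of_adjoin_eq_top adjoin_range_coord _ <| by
      rintro _ ⟨j, rfl⟩
      obtain ⟨c, l, hc⟩ := bracket 0 j
      rw [hc, RingHom.mem_ker, AlgHom.map_smul_of_tower, tangentX_coord_sq, smul_zero]
  have : coord k 0 ∈ RingHom.ker (tangentX k) := by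
    rw [← hE 0, ← hh, skew]
    exact neg_mem (hker h)
  rw [RingHom.mem_ker, tangentX_coord_zero] at this
  simpa using congrArg TrivSqZeroExt.snd this

end Bracket

end FermatCone

theorem stmt13_general (k : Type*) [Field k] [CharZero k]
    (ξ : FermatCone k → Derivation k (FermatCone k) (FermatCone k))
    (skew : ∀ f g, ξ f g = - ξ g f)
    (hxy : ξ (Ideal.Quotient.mk _ (X 0)) (Ideal.Quotient.mk _ (X 1)) =
      Ideal.Quotient.mk _ (3 * (X 2 : MvPolynomial (Fin 3) k) ^ 2))
    (hyz : ξ (Ideal.Quotient.mk _ (X 1)) (Ideal.Quotient.mk _ (X 2)) =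
      Ideal.Quotient.mk _ (3 * (X 0 : MvPolynomial (Fin 3) k) ^ 2))
    (hzx : ξ (Ideal.Quotient.mk _ (X 2)) (Ideal.Quotient.mk _ (X 0)) =
      Ideal.Quotient.mk _ (3 * (X 1 : MvPolynomial (Fin 3) k) ^ 2))
    (E : Derivation k (FermatCone k) (FermatCone k))
    (hE : ∀ i : Fin 3, E (Ideal.Quotient.mk _ (X i)) = Ideal.Quotient.mk _ (X i)) :
    (∀ f g, E (ξ f g) = ξ (E f) g + ξ f (E g)) ∧
    ¬ ∃ h : FermatCone k, ∀ f, ξ h f = E f := by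
  open FermatCone in
  have bracket := coord_bracket_eq_smul_sq skew
    (by rw [hxy, map_mul, map_pow, map_ofNat]) (by rw [hyz, map_mul, map_pow, map_ofNat])
    (by rw [hzx, map_mul, map_pow, map_ofNat])
  exact ⟨euler_map_bracket skew bracket hE,
    fun ⟨h, hh⟩ => bracket_ne_euler skew bracket hE h (Derivation.ext hh)⟩

/-- On `B = k[x,y,z]/(x³+y³+z³)` with the Jacobian Poisson bracket determined by
`{x,y} = 3z²`, `{y,z} = 3x²`, `{z,x} = 3y²`: (a) the Euler derivation
`E = x∂_x + y∂_y + z∂_z` is Poisson, and (b) `E` is not Hamiltonian. -/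
theorem stmt13 (k : Type*) [Field k] [CharZero k]
    (ξ : FermatCone k → Derivation k (FermatCone k) (FermatCone k))
    (skew : ∀ f g, ξ f g = - ξ g f)
    (jacobi : ∀ f g h, ξ f (ξ g h) = ξ (ξ f g) h + ξ g (ξ f h))
    (hxy : ξ (Ideal.Quotient.mk _ (X 0)) (Ideal.Quotient.mk _ (X 1)) =
      Ideal.Quotient.mk _ (3 * (X 2 : MvPolynomial (Fin 3) k) ^ 2))
    (hyz : ξ (Ideal.Quotient.mk _ (X 1)) (Ideal.Quotient.mk _ (X 2)) =
      Ideal.Quotient.mk _ (3 * (X 0 : MvPolynomial (Fin 3) k) ^ 2))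
    (hzx : ξ (Ideal.Quotient.mk _ (X 2)) (Ideal.Quotient.mk _ (X 0)) =
      Ideal.Quotient.mk _ (3 * (X 1 : MvPolynomial (Fin 3) k) ^ 2))
    (E : Derivation k (FermatCone k) (FermatCone k))
    (hE : ∀ i : Fin 3, E (Ideal.Quotient.mk _ (X i)) = Ideal.Quotient.mk _ (X i)) :
    (∀ f g, E (ξ f g) = ξ (E f) g + ξ f (E g)) ∧
    ¬ ∃ h : FermatCone k, ∀ f, ξ h f = E f :=
  stmt13_general k ξ skew hxy hyz hzx E hE
end
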